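/- Let t, d ∈ ℂ[[z]] be such that t² − 4d has a simple zero at z = 0. Suppose A ∈ M₂(ℂ[[z,λ]]) satisfies tr A(z,0) = t and det A(z,0) = d, and suppose R ∈ M₂(ℂ((z))[[λ]]) is invertible over ℂ((z))[[λ]] with R(z,0) ∈ M₂(ℂ[[z]]) invertible over ℂ[[z]]. If Gauge_λ(A,R) = R⁻¹AR + λR⁻¹(dR/dz) ∈ M₂(ℂ[[z,λ]]), then R ∈ M₂(ℂ[[z,λ]]) and R is invertible over ℂ[[z,λ]]. -/

import Mathlib

open PowerSeries

noncomputable section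

/-- `K = ℂ((z))`, the field of formal Laurent series. -/
abbrev K : Type := LaurentSeries ℂ

/-- The formal derivative `d/dz` on Laurent series. -/
def lD (f : K) : K where
  coeff n := ((n : ℂ) + 1) * f.coeff (n + 1)
  isPWO_support' := by
    apply Set.IsPWO.mono ((f.isPWO_support).image_of_monotone
      (f := fun m : ℤ => m - 1) (fun a b hab => by simpa using hab))
    intro n hn
    refine ⟨n + 1, ?_, by ring⟩
    intro h0
    apply hn
    simp [h0]

/-- `ℂ[[z]]` viewed as a subring of `ℂ((z))`. -/
def Oz : Subring K := (HahnSeries.ofPowerSeries ℤ ℂ).range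

/-- `h ∈ ℂ[[z]]` has a simple zero at `z = 0`. -/
def SimpleZero (h : PowerSeries ℂ) : Prop :=
  PowerSeries.coeff 0 h = 0 ∧ PowerSeries.coeff 1 h ≠ 0

/-- `K̂ = ℂ((z))[[λ]]`, formal power series in `λ` with Laurent series coefficients. -/
abbrev Khat : Type := PowerSeries K

/-- The `λ`-coefficientwise formal derivative `d/dz` on `ℂ((z))[[λ]]`. -/
def pD (F : Khat) : Khat := PowerSeries.mk fun i => lD (PowerSeries.coeff i F)

/-- `F ∈ ℂ[[z,λ]]`: every `λ`-coefficient of `F` lies in `ℂ[[z]]`. -/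
def MemOhat (F : Khat) : Prop := ∀ i, PowerSeries.coeff i F ∈ Oz

/-- The `λ`-gauge transform `Gauge_λ(A,R) = R⁻¹AR + λ·R⁻¹·(dR/dz)`. -/
def lamGauge (A R : Matrix (Fin 2) (Fin 2) Khat) : Matrix (Fin 2) (Fin 2) Khat :=
  R⁻¹ * A * R + (PowerSeries.X : Khat) • (R⁻¹ * R.map pD)

/-- The constant term in `λ`: `F(z,0)`. -/
def ev0 : Khat →+* K := PowerSeries.constantCoeff

/-- The residue of a Laurent series: the coefficient of `z⁻¹`. -/
def res (f : K) : ℂ := f.coeff (-1)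

/-- The residue of an element of `ℂ((z))[[λ]]`, an element of `ℂ[[λ]]`. -/
def resHat (F : Khat) : PowerSeries ℂ := PowerSeries.mk fun i => res (PowerSeries.coeff i F)

/-!
Conjugating by constant matrices in `GL₂(ℂ[[z]])`, we may assume that `A(z,0)` and
`B(z,0) = R(z,0)⁻¹ A(z,0) R(z,0)`, where `B = Gauge_λ(A,R)`, both equal the companion
matrix `N` of `X² - t X + d`. The gauge equation `λ R' = R B - A R` is then solved order by
order in `λ`: if `R ≡ λⁿ U` modulo `ℂ[[z,λ]]`, then `λ U' - (U B - A U)` is integral. Its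
`λ⁰`-part says that `[U₀, N]` is integral, so `U₀ = α + β N` up to integral terms. In its
`λ¹`-part the traces against `1` and `N` eliminate `U₁` and leave a first order system
`(t² - 4d) (α, β)' = P (α, β) + O(1)`. Since `t² - 4d` has a simple zero, this system is
regular singular at `z = 0` with indicial roots `0` and `-1/2`, so `α` and `β` have no pole.
Applying the same argument to `R⁻¹`, which transforms `B` back into `A`, gives invertibility.
-/

open Matrix

local notation "M₂" => Matrix (Fin 2) (Fin 2)

theorem mem_Oz_iff {f : K} : f ∈ Oz ↔ ∀ n < 0, f.coeff n = 0 := by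
  constructor
  · rintro ⟨p, rfl⟩ n hn
    rw [HahnSeries.ofPowerSeries_apply, HahnSeries.embDomain_of_notMem_range]
    rintro ⟨m, hm⟩
    simp at hm
    omega
  · intro h
    refine ⟨PowerSeries.mk fun m => f.coeff m, HahnSeries.ext <| funext fun n => ?_⟩
    obtain ⟨n, rfl⟩ | hn := (le_or_gt 0 n).imp_left Int.eq_ofNat_of_zero_le
    · rw [HahnSeries.ofPowerSeries_apply_coeff, coeff_mk]
    · rw [h n hn, HahnSeries.ofPowerSeries_apply, HahnSeries.embDomain_of_notMem_range]
      rintro ⟨m, hm⟩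
      simp at hm
      omega

theorem HahnSeries.coeff_mul_of_forall_lt {R : Type*} [NonUnitalNonAssocSemiring R]
    {f g : HahnSeries ℤ R} {a b : ℤ} (hf : ∀ n < a, f.coeff n = 0)
    (hg : ∀ n < b, g.coeff n = 0) : (f * g).coeff (a + b) = f.coeff a * g.coeff b := by
  rw [HahnSeries.coeff_mul, Finset.sum_eq_single (a, b)]
  · rintro ⟨i, j⟩ hij hne
    obtain ⟨-, -, hij⟩ := Finset.mem_antidiagonal.mp hij
    rcases lt_or_ge i a with h | h
    · rw [hf i h, zero_mul]
    · rw [hg j (by grind), mul_zero]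
  · intro h
    by_contra hne
    exact h (Finset.mem_antidiagonal.mpr
      ⟨left_ne_zero_of_mul hne, right_ne_zero_of_mul hne, rfl⟩)

theorem coeff_zero_mul_of_mem_Oz {f g : K} (hf : f ∈ Oz) (hg : g ∈ Oz) :
    (f * g).coeff 0 = f.coeff 0 * g.coeff 0 :=
  HahnSeries.coeff_mul_of_forall_lt (mem_Oz_iff.mp hf) (mem_Oz_iff.mp hg)

theorem forall_lt_one_coeff_eq_zero {f : K} (hf : f ∈ Oz) (hf0 : f.coeff 0 = 0) :
    ∀ n < 1, f.coeff n = 0 := fun n hn => by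
  rcases eq_or_ne n 0 with rfl | h
  · exact hf0
  · exact mem_Oz_iff.mp hf n (by omega)

theorem coeff_one_mul_eq_zero {f g : K} (hf : f ∈ Oz) (hg : g ∈ Oz) (hf0 : f.coeff 0 = 0)
    (hg0 : g.coeff 0 = 0) : (f * g).coeff 1 = 0 := by
  simpa [hg0] using HahnSeries.coeff_mul_of_forall_lt (a := 1) (b := 0)
    (forall_lt_one_coeff_eq_zero hf hf0) (mem_Oz_iff.mp hg)

theorem isUnit_of_coeff_zero_ne_zero {x : Oz} (hx0 : (x : K).coeff 0 ≠ 0) : IsUnit x := by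
  obtain ⟨p, hp⟩ := x.2
  have hx : x = (HahnSeries.ofPowerSeries ℤ ℂ).rangeRestrict p := Subtype.ext hp.symm
  refine hx ▸ (isUnit_iff_constantCoeff.mpr (Ne.isUnit ?_)).map _
  rwa [← coeff_zero_eq_constantCoeff_apply, ← HahnSeries.ofPowerSeries_apply_coeff (Γ := ℤ),
    Nat.cast_zero, hp]

theorem exists_units_of_det_coeff_zero_ne_zero {n : Type*} [Fintype n] [DecidableEq n]
    {G : Matrix n n K} (hG : G ∈ Oz.matrix) (hdet : G.det.coeff 0 ≠ 0) :
    ∃ U : (Matrix n n K)ˣ, ↑U = G ∧ (↑U⁻¹ : Matrix n n K) ∈ Oz.matrix := by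
  set G' : Matrix n n Oz := of fun i j => ⟨G i j, hG i j⟩
  have hG' : Oz.subtype.mapMatrix G' = G := rfl
  have hunit : IsUnit G' := (isUnit_iff_isUnit_det G').mpr <|
    isUnit_of_coeff_zero_ne_zero (by rwa [← Oz.subtype_apply, RingHom.map_det, hG'])
  refine ⟨hunit.unit.map (Oz.subtype.mapMatrix : Matrix n n Oz →+* Matrix n n K).toMonoidHom,
    hG', fun i j => ?_⟩
  exact (hunit.unit⁻¹.val i j).2

theorem Subring.fin_two_mem_matrix {R : Type*} [Ring R] {S : Subring R} {a b c d : R}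
    (ha : a ∈ S) (hb : b ∈ S) (hc : c ∈ S) (hd : d ∈ S) : !![a, b; c, d] ∈ S.matrix := by
  intro i j
  fin_cases i <;> fin_cases j <;> simpa

theorem trace_mem_Oz {M : M₂ K} (hM : M ∈ Oz.matrix) : M.trace ∈ Oz := by
  rw [trace_fin_two]
  exact add_mem (hM 0 0) (hM 1 1)

theorem det_mem_Oz {M : M₂ K} (hM : M ∈ Oz.matrix) : M.det ∈ Oz := by
  rw [det_fin_two]
  exact sub_mem (mul_mem (hM 0 0) (hM 1 1)) (mul_mem (hM 0 1) (hM 1 0))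

theorem trace_map_coeff_zero (M : M₂ K) : (M.map (·.coeff 0)).trace = M.trace.coeff 0 := by
  simp [trace_fin_two]

theorem det_map_coeff_zero {M : M₂ K} (hM : M ∈ Oz.matrix) :
    (M.map (·.coeff 0)).det = M.det.coeff 0 := by
  simp [det_fin_two, coeff_zero_mul_of_mem_Oz (hM 0 0) (hM 1 1),
    coeff_zero_mul_of_mem_Oz (hM 0 1) (hM 1 0)]

@[simp] theorem coeff_lD (f : K) (n : ℤ) : (lD f).coeff n = (n + 1) * f.coeff (n + 1) := rfl

/-- The Euler operator `z d/dz`; unlike `lD` it preserves degrees, which makes its Leibniz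
rule a termwise identity. -/
def eulerOp (f : K) : K where
  coeff n := n * f.coeff n
  isPWO_support' := f.isPWO_support.mono fun _ hn => right_ne_zero_of_mul hn

theorem eulerOp_mul (f g : K) : eulerOp (f * g) = eulerOp f * g + f * eulerOp g := by
  have hsupp (h : K) : (eulerOp h).support ⊆ h.support := fun n hn => right_ne_zero_of_mul hn
  ext n
  rw [HahnSeries.coeff_add, HahnSeries.coeff_mul_left' f.isPWO_support (hsupp f),
    HahnSeries.coeff_mul_right' g.isPWO_support (hsupp g)]
  simp only [eulerOp, HahnSeries.coeff_mul, Finset.mul_sum, ← Finset.sum_add_distrib]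
  refine Finset.sum_congr rfl fun ij hij => ?_
  have h : (ij.1 : ℂ) + ij.2 = n := by exact_mod_cast (Finset.mem_antidiagonal.mp hij).2.2
  rw [← h]
  ring

theorem lD_eq_single_mul_eulerOp (f : K) : lD f = HahnSeries.single (-1) 1 * eulerOp f := by
  ext n
  have h := HahnSeries.coeff_single_mul_add (r := (1 : ℂ)) (x := eulerOp f) (a := n + 1) (b := -1)
  rw [add_neg_cancel_right] at h
  rw [h, coeff_lD]
  simp [eulerOp]

theorem lD_add (f g : K) : lD (f + g) = lD f + lD g := by
  ext n
  simp only [lD, HahnSeries.coeff_add]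
  ring

theorem lD_mul (f g : K) : lD (f * g) = lD f * g + f * lD g := by
  simp only [lD_eq_single_mul_eulerOp, eulerOp_mul]
  ring

theorem lD_zero : lD 0 = 0 := map_zero (AddMonoidHom.mk' lD lD_add)

theorem lD_neg (f : K) : lD (-f) = -lD f := map_neg (AddMonoidHom.mk' lD lD_add) f

theorem lD_sub (f g : K) : lD (f - g) = lD f - lD g := map_sub (AddMonoidHom.mk' lD lD_add) f g

theorem lD_sum {α : Type*} (s : Finset α) (f : α → K) :
    lD (∑ i ∈ s, f i) = ∑ i ∈ s, lD (f i) :=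
  map_sum (AddMonoidHom.mk' lD lD_add) f s

theorem lD_one : lD 1 = 0 := by
  simpa using lD_mul 1 1

theorem lD_natCast (n : ℕ) : lD n = 0 := by
  induction n with
  | zero => simpa using lD_zero
  | succ n ih => rw [Nat.cast_succ, lD_add, ih, lD_one, add_zero]

theorem lD_mem_Oz {f : K} (hf : f ∈ Oz) : lD f ∈ Oz := by
  refine mem_Oz_iff.mpr fun n hn => ?_
  rcases eq_or_ne n (-1) with rfl | h
  · simp
  · simp [mem_Oz_iff.mp hf (n + 1) (by omega)]

theorem exists_forall_coeff_eq_zero_of_lt {ι R : Type*} [Finite ι] [Zero R]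
    (u : ι → HahnSeries ℤ R) :
    ∃ N : ℤ, ∀ i, ∀ n < N, (u i).coeff n = 0 := by
  obtain ⟨N, hN⟩ := (Set.finite_range fun i => (u i).order).bddBelow
  exact ⟨N, fun i n hn =>
    HahnSeries.coeff_eq_zero_of_lt_order (hn.trans_le (hN ⟨i, rfl⟩))⟩

/-- If `u` had a pole, its lowest coefficient `u_m` (with `m < 0`) would satisfy
`(m e'(0) - P(0)) u_m = 0`. -/
theorem mem_Oz_of_regularSingular {ι : Type*} [Fintype ι] [DecidableEq ι] {e : K}
    (he : ∀ n < 1, e.coeff n = 0) {P : Matrix ι ι K} (hP : P ∈ Oz.matrix)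
    (hdet : ∀ m : ℤ, m < 0 → ((m * e.coeff 1) • 1 - P.map (·.coeff 0)).det ≠ 0)
    {u : ι → K} (hu : ∀ i, e * lD (u i) - (P *ᵥ u) i ∈ Oz) (i : ι) : u i ∈ Oz := by
  have step : ∀ n < 0, (∀ m < n, ∀ i, (u i).coeff m = 0) → ∀ i, (u i).coeff n = 0 := by
    intro n hn hlow
    set v : ι → ℂ := fun i => (u i).coeff n
    suffices ((n * e.coeff 1) • 1 - P.map (·.coeff 0)) *ᵥ v = 0 from
      congrFun (eq_zero_of_mulVec_eq_zero (hdet n hn) this)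
    ext i
    have hlD : ∀ m < n - 1, (lD (u i)).coeff m = 0 := fun m hm => by
      simp [hlow (m + 1) (by omega) i]
    have h1 : (e * lD (u i)).coeff n = n * e.coeff 1 * v i := by
      have := HahnSeries.coeff_mul_of_forall_lt he hlD
      rw [add_sub_cancel, coeff_lD, sub_add_cancel] at this
      rw [this]
      push_cast
      ring
    have h2 : ((P *ᵥ u) i).coeff n = ∑ j, (P i j).coeff 0 * v j := by
      simp only [mulVec, dotProduct, HahnSeries.coeff_sum]
      refine Finset.sum_congr rfl fun j _ => ?_
      simpa using HahnSeries.coeff_mul_of_forall_lt (a := 0) (b := n)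
        (mem_Oz_iff.mp (hP i j)) (fun m hm => hlow m hm j)
    have h := mem_Oz_iff.mp (hu i) n hn
    rw [HahnSeries.coeff_sub, h1, h2] at h
    simpa [mulVec, dotProduct, sub_mul, Matrix.one_apply, v] using h
  obtain ⟨N, hN⟩ := exists_forall_coeff_eq_zero_of_lt u
  have hall : ∀ n, N ≤ n → ∀ m < n, m < 0 → ∀ i, (u i).coeff m = 0 := by
    intro n hn
    induction n, hn using Int.leInduction with
    | base => exact fun m hm _ i => hN i m hm
    | succ n _ ih =>
      intro m hm hm0
      rcases lt_or_eq_of_le (Int.lt_add_one_iff.mp hm) with hm | rfl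
      · exact ih m hm hm0
      · exact step m hm0 fun k hk => ih k hk (hk.trans hm0)
  exact mem_Oz_iff.mpr fun m hm =>
    hall (max N (m + 1)) (le_max_left _ _) m (by omega) hm i

/-- The eigenvalues of `P₀` are `0` and `-w/2`. -/
theorem det_smul_one_sub_ne_zero {P₀ : M₂ ℂ} {w : ℂ} (hw : w ≠ 0)
    (htr : P₀.trace = -w / 2) (hdet : P₀.det = 0) {m : ℤ} (hm : m < 0) :
    ((m * w) • 1 - P₀).det ≠ 0 := by
  rw [trace_fin_two] at htr
  rw [det_fin_two] at hdet
  have h : ((m * w) • 1 - P₀).det = w ^ 2 * m * (m + 1 / 2) := by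
    simp [det_fin_two]
    linear_combination (-(m * w)) * htr + hdet
  have hm0 : (m : ℂ) ≠ 0 := by exact_mod_cast hm.ne
  have hm2 : (m : ℂ) + 1 / 2 ≠ 0 := fun h => by
    have : ((2 * m + 1 : ℤ) : ℂ) = 0 := by push_cast; linear_combination 2 * h
    have : 2 * m + 1 = 0 := by exact_mod_cast this
    omega
  rw [h]
  exact mul_ne_zero (mul_ne_zero (pow_ne_zero 2 hw) hm0) hm2

/-- The zeroth-order matrix of the system in `mem_Oz_of_companion_system`, multiplied by the
adjugate of its leading matrix `!![2, T; T, T ^ 2 - 2 * D]`, whose determinant is `T ^ 2 - 4 * D`.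
-/
def companionSystemMatrix (T D τ ν : K) : M₂ K :=
  !![T ^ 2 - 2 * D, -T; -T, 2] * !![τ, ν - lD T; ν, T * ν - D * τ - T * lD T + lD D]

section companionSystemMatrix

variable {T D τ ν : K}

theorem companionSystemMatrix_mem_matrix (hT : T ∈ Oz) (hD : D ∈ Oz) (hτ : τ ∈ Oz)
    (hν : ν ∈ Oz) : companionSystemMatrix T D τ ν ∈ Oz.matrix := by
  have hρ : T * ν - D * τ - T * lD T + lD D ∈ Oz :=
    add_mem (sub_mem (sub_mem (mul_mem hT hν) (mul_mem hD hτ)) (mul_mem hT (lD_mem_Oz hT)))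
      (lD_mem_Oz hD)
  exact mul_mem (Subring.fin_two_mem_matrix (sub_mem (pow_mem hT 2) (mul_mem (by simp) hD))
    (neg_mem hT) (neg_mem hT) (by simp))
    (Subring.fin_two_mem_matrix hτ (sub_mem hν (lD_mem_Oz hT)) hν hρ)

theorem trace_map_coeff_zero_companionSystemMatrix (hT : T ∈ Oz) (hD : D ∈ Oz) (hτ : τ ∈ Oz)
    (he0 : (T ^ 2 - 4 * D).coeff 0 = 0) :
    ((companionSystemMatrix T D τ ν).map (·.coeff 0)).trace = -(T ^ 2 - 4 * D).coeff 1 / 2 := by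
  have he : T ^ 2 - 4 * D ∈ Oz := sub_mem (pow_mem hT 2) (mul_mem (by simp) hD)
  have htr : (companionSystemMatrix T D τ ν).trace =
      τ * (T ^ 2 - 4 * D) - (T * lD T - 2 * lD D) := by
    simp [companionSystemMatrix, trace_fin_two]
    ring
  have hlD : lD (T ^ 2 - 4 * D) = (T * lD T - 2 * lD D) + (T * lD T - 2 * lD D) := by
    have h4 : lD 4 = 0 := by exact_mod_cast lD_natCast 4
    simp only [lD_sub, sq, lD_mul, h4]
    ring
  have he1 : (T ^ 2 - 4 * D).coeff 1 =
      (T * lD T - 2 * lD D).coeff 0 + (T * lD T - 2 * lD D).coeff 0 := by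
    simpa using congrArg (·.coeff 0) hlD
  rw [trace_map_coeff_zero, htr, HahnSeries.coeff_sub, coeff_zero_mul_of_mem_Oz hτ he, he0, he1]
  ring

theorem det_map_coeff_zero_companionSystemMatrix (hT : T ∈ Oz) (hD : D ∈ Oz) (hτ : τ ∈ Oz)
    (hν : ν ∈ Oz) (he0 : (T ^ 2 - 4 * D).coeff 0 = 0) :
    ((companionSystemMatrix T D τ ν).map (·.coeff 0)).det = 0 := by
  have he : T ^ 2 - 4 * D ∈ Oz := sub_mem (pow_mem hT 2) (mul_mem (by simp) hD)
  have hdet : (companionSystemMatrix T D τ ν).det =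
      (T ^ 2 - 4 * D) * (τ * (T * ν - D * τ - T * lD T + lD D) - (ν - lD T) * ν) := by
    simp [companionSystemMatrix, det_fin_two]
    ring
  have hρ : T * ν - D * τ - T * lD T + lD D ∈ Oz :=
    add_mem (sub_mem (sub_mem (mul_mem hT hν) (mul_mem hD hτ)) (mul_mem hT (lD_mem_Oz hT)))
      (lD_mem_Oz hD)
  rw [det_map_coeff_zero (companionSystemMatrix_mem_matrix hT hD hτ hν), hdet,
    coeff_zero_mul_of_mem_Oz he (sub_mem (mul_mem hτ hρ) (mul_mem (sub_mem hν (lD_mem_Oz hT)) hν)),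
    he0, zero_mul]

end companionSystemMatrix

theorem mem_Oz_of_companion_system {T D τ ν α β : K} (hT : T ∈ Oz) (hD : D ∈ Oz)
    (hτ : τ ∈ Oz) (hν : ν ∈ Oz) (he0 : (T ^ 2 - 4 * D).coeff 0 = 0)
    (he1 : (T ^ 2 - 4 * D).coeff 1 ≠ 0)
    (h₁ : 2 * lD α + T * lD β - τ * α - (ν - lD T) * β ∈ Oz)
    (h₂ : T * lD α + (T ^ 2 - 2 * D) * lD β - ν * α -
      (T * ν - D * τ - T * lD T + lD D) * β ∈ Oz) :
    α ∈ Oz ∧ β ∈ Oz := by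
  have he : T ^ 2 - 4 * D ∈ Oz := sub_mem (pow_mem hT 2) (mul_mem (by simp) hD)
  have hQ : T ^ 2 - 2 * D ∈ Oz := sub_mem (pow_mem hT 2) (mul_mem (by simp) hD)
  have hu : ∀ i, (T ^ 2 - 4 * D) * lD (![α, β] i) -
      (companionSystemMatrix T D τ ν *ᵥ ![α, β]) i ∈ Oz := by
    intro i
    fin_cases i
    · convert sub_mem (mul_mem hQ h₁) (mul_mem hT h₂) using 1
      simp [companionSystemMatrix, mulVec, dotProduct]
      ring
    · convert add_mem (mul_mem (neg_mem hT) h₁) (add_mem h₂ h₂) using 1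
      simp [companionSystemMatrix, mulVec, dotProduct]
      ring
  have hαβ := mem_Oz_of_regularSingular (forall_lt_one_coeff_eq_zero he he0)
    (companionSystemMatrix_mem_matrix hT hD hτ hν)
    (fun m hm => det_smul_one_sub_ne_zero he1
      (trace_map_coeff_zero_companionSystemMatrix hT hD hτ he0)
      (det_map_coeff_zero_companionSystemMatrix hT hD hτ hν he0) hm) hu
  exact ⟨hαβ 0, hαβ 1⟩

def companion {R : Type*} [CommRing R] (T D : R) : M₂ R := !![0, -D; 1, T]

section companion

variable {R : Type*} [CommRing R]

theorem mul_cyclic_eq_cyclic_mul_companion (M : M₂ R) (v : Fin 2 → R) :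
    M * of (fun i => ![v i, (M *ᵥ v) i]) =
      of (fun i => ![v i, (M *ᵥ v) i]) * companion M.trace M.det := by
  ext i j
  fin_cases i <;> fin_cases j <;>
    simp [companion, mul_apply, mulVec, dotProduct, Fin.sum_univ_two, trace_fin_two,
      det_fin_two] <;> ring

theorem sub_smul_one_add_smul_companion (X : M₂ R) (T D : R) :
    X - (X 0 0 • 1 + X 1 0 • companion T D) =
      !![0, (X * companion T D - companion T D * X) 0 0;
        0, (X * companion T D - companion T D * X) 1 0] := by
  ext i j
  fin_cases i <;> fin_cases j <;>
    simp [companion, mul_apply, vecMul, dotProduct, Fin.sum_univ_two] <;> ring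

theorem smul_one_add_smul_companion (T D α β : R) :
    α • 1 + β • companion T D = !![α, β * -D; β, α + β * T] := by
  refine Matrix.ext fun i j => ?_
  fin_cases i <;> fin_cases j <;> simp [companion]

theorem trace_commutator_companion (Y : M₂ R) (T D : R) :
    (Y * companion T D - companion T D * Y).trace = 0 := by
  rw [trace_sub, trace_mul_comm, sub_self]

theorem trace_commutator_companion_mul (Y : M₂ R) (T D : R) :
    ((Y * companion T D - companion T D * Y) * companion T D).trace = 0 := by
  rw [sub_mul, trace_sub, Matrix.mul_assoc (companion T D) Y, trace_mul_comm (companion T D),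
    sub_self]

end companion

theorem companion_mem_matrix {T D : K} (hT : T ∈ Oz) (hD : D ∈ Oz) :
    companion T D ∈ Oz.matrix :=
  Subring.fin_two_mem_matrix (zero_mem _) (neg_mem hD) (one_mem _) hT

theorem coeff_one_disc_eq_zero {M : M₂ K} (hM : M ∈ Oz.matrix)
    (h10 : (M 1 0).coeff 0 = 0) (h01 : (M 0 1).coeff 0 = 0) (hd : (M 1 1 - M 0 0).coeff 0 = 0) :
    (M.trace ^ 2 - 4 * M.det).coeff 1 = 0 := by
  have hsub : M 1 1 - M 0 0 ∈ Oz := sub_mem (hM 1 1) (hM 0 0)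
  have hprod := coeff_one_mul_eq_zero (hM 0 1) (hM 1 0) h01 h10
  have hdisc : M.trace ^ 2 - 4 * M.det = (M 1 1 - M 0 0) * (M 1 1 - M 0 0) +
      (M 0 1 * M 1 0 + M 0 1 * M 1 0 + M 0 1 * M 1 0 + M 0 1 * M 1 0) := by
    rw [trace_fin_two, det_fin_two]
    ring
  simp [hdisc, coeff_one_mul_eq_zero hsub hsub hd hd, hprod]

theorem exists_units_conj_eq_companion {M : M₂ K} (hM : M ∈ Oz.matrix)
    (hdisc : (M.trace ^ 2 - 4 * M.det).coeff 1 ≠ 0) :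
    ∃ G : (M₂ K)ˣ, (↑G : M₂ K) ∈ Oz.matrix ∧ (↑G⁻¹ : M₂ K) ∈ Oz.matrix ∧
      (↑G⁻¹ : M₂ K) * M * (↑G : M₂ K) = companion M.trace M.det := by
  have hcyc : ∃ v : Fin 2 → K, (∀ i, v i ∈ Oz) ∧
      (of fun i => ![v i, (M *ᵥ v) i]).det.coeff 0 ≠ 0 := by
    by_cases h10 : (M 1 0).coeff 0 = 0
    · by_cases h01 : (M 0 1).coeff 0 = 0
      · refine ⟨![1, 1], fun i => by fin_cases i <;> exact one_mem Oz, fun h => hdisc ?_⟩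
        refine coeff_one_disc_eq_zero hM h10 h01 ?_
        simp [det_fin_two, mulVec, dotProduct, Fin.sum_univ_two, h10, h01] at h ⊢
        linear_combination h
      · refine ⟨![0, 1], fun i => by fin_cases i <;> simp [zero_mem, one_mem], ?_⟩
        simpa [det_fin_two, mulVec, dotProduct, Fin.sum_univ_two] using h01
    · refine ⟨![1, 0], fun i => by fin_cases i <;> simp [zero_mem, one_mem], ?_⟩
      simpa [det_fin_two, mulVec, dotProduct, Fin.sum_univ_two] using h10
  obtain ⟨v, hv, hdet⟩ := hcyc
  have hG : of (fun i => ![v i, (M *ᵥ v) i]) ∈ Oz.matrix := fun i j => by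
    fin_cases j
    · exact hv i
    · simpa [mulVec, dotProduct] using
        add_mem (Oz.mul_mem (hM i 0) (hv 0)) (Oz.mul_mem (hM i 1) (hv 1))
  obtain ⟨G, hGeq, hGinv⟩ := exists_units_of_det_coeff_zero_ne_zero hG hdet
  refine ⟨G, hGeq ▸ hG, hGinv, ?_⟩
  rw [mul_assoc, hGeq, mul_cyclic_eq_cyclic_mul_companion, ← hGeq, ← mul_assoc, G.inv_mul,
    one_mul]

section zGaugeDefect

variable {ι : Type*} [Fintype ι] [DecidableEq ι]

/-- Up to a commutator, the `λ¹`-coefficient of a gauge defect. -/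
def zGaugeDefect (a b Y : Matrix ι ι K) : Matrix ι ι K := Y * b - a * Y - Y.map lD

theorem zGaugeDefect_add (a b Y Y' : Matrix ι ι K) :
    zGaugeDefect a b (Y + Y') = zGaugeDefect a b Y + zGaugeDefect a b Y' := by
  simp only [zGaugeDefect, Matrix.map_add lD lD_add]
  noncomm_ring

theorem zGaugeDefect_mem_matrix {a b Y : Matrix ι ι K} (ha : a ∈ Oz.matrix)
    (hb : b ∈ Oz.matrix) (hY : Y ∈ Oz.matrix) : zGaugeDefect a b Y ∈ Oz.matrix :=
  sub_mem (sub_mem (mul_mem hY hb) (mul_mem ha hY)) fun i j => lD_mem_Oz (hY i j)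

end zGaugeDefect

theorem trace_zGaugeDefect_companion (T D α β : K) (a b : M₂ K) :
    (zGaugeDefect a b (α • 1 + β • companion T D)).trace =
      -(2 * lD α + T * lD β - (b - a).trace * α -
        ((companion T D * (b - a)).trace - lD T) * β) := by
  rw [smul_one_add_smul_companion, eta_fin_two a, eta_fin_two b]
  simp [zGaugeDefect, trace_fin_two, companion, lD_add, lD_mul]
  ring

theorem trace_zGaugeDefect_companion_mul_companion (T D α β : K) (a b : M₂ K) :
    (zGaugeDefect a b (α • 1 + β • companion T D) * companion T D).trace =
      -(T * lD α + (T ^ 2 - 2 * D) * lD β - (companion T D * (b - a)).trace * α -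
        (T * (companion T D * (b - a)).trace - D * (b - a).trace - T * lD T + lD D) * β) := by
  rw [smul_one_add_smul_companion, eta_fin_two a, eta_fin_two b]
  simp [zGaugeDefect, trace_fin_two, mul_apply, companion, lD_add, lD_neg, lD_mul]
  ring

theorem mem_matrix_of_companion_step {T D : K} (hT : T ∈ Oz) (hD : D ∈ Oz)
    (he0 : (T ^ 2 - 4 * D).coeff 0 = 0) (he1 : (T ^ 2 - 4 * D).coeff 1 ≠ 0)
    {a b X₀ X₁ : M₂ K} (ha : a ∈ Oz.matrix) (hb : b ∈ Oz.matrix)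
    (h₀ : X₀ * companion T D - companion T D * X₀ ∈ Oz.matrix)
    (h₁ : zGaugeDefect a b X₀ + (X₁ * companion T D - companion T D * X₁) ∈ Oz.matrix) :
    X₀ ∈ Oz.matrix := by
  set N := companion T D
  have hN : N ∈ Oz.matrix := companion_mem_matrix hT hD
  set Y := X₀ 0 0 • 1 + X₀ 1 0 • N
  have hW : X₀ - Y ∈ Oz.matrix := by
    rw [sub_smul_one_add_smul_companion]
    exact Subring.fin_two_mem_matrix (zero_mem _) (h₀ 0 0) (zero_mem _) (h₀ 1 0)
  have hE : zGaugeDefect a b Y + (X₁ * N - N * X₁) ∈ Oz.matrix := by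
    have hsplit : zGaugeDefect a b X₀ = zGaugeDefect a b Y + zGaugeDefect a b (X₀ - Y) := by
      rw [← zGaugeDefect_add, add_sub_cancel]
    have h := sub_mem h₁ (zGaugeDefect_mem_matrix ha hb hW)
    rwa [hsplit, add_right_comm, add_sub_cancel_right] at h
  have h₁ := neg_mem (trace_mem_Oz hE)
  have h₂ := neg_mem (trace_mem_Oz (mul_mem hE hN))
  rw [trace_add, trace_commutator_companion, add_zero, trace_zGaugeDefect_companion,
    neg_neg] at h₁
  rw [add_mul, trace_add, trace_commutator_companion_mul, add_zero,
    trace_zGaugeDefect_companion_mul_companion, neg_neg] at h₂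
  obtain ⟨hα, hβ⟩ := mem_Oz_of_companion_system hT hD (trace_mem_Oz (sub_mem hb ha))
    (trace_mem_Oz (mul_mem hN (sub_mem hb ha))) he0 he1 h₁ h₂
  have hY : Y ∈ Oz.matrix := by
    rw [show Y = _ from smul_one_add_smul_companion T D (X₀ 0 0) (X₀ 1 0)]
    exact Subring.fin_two_mem_matrix hα (mul_mem hβ (neg_mem hD)) hβ
      (add_mem hα (mul_mem hβ hT))
  simpa using add_mem hW hY

def Ohat : Subring Khat := (PowerSeries.map Oz.subtype).range

theorem mem_Ohat_iff {F : Khat} : F ∈ Ohat ↔ MemOhat F := by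
  constructor
  · rintro ⟨G, rfl⟩ i
    simp [coeff_map]
  · exact fun h => ⟨mk fun i => ⟨coeff i F, h i⟩, by ext i; simp [coeff_map]⟩

theorem coeff_mem_Oz {F : Khat} (hF : F ∈ Ohat) (n : ℕ) : coeff n F ∈ Oz :=
  mem_Ohat_iff.mp hF n

theorem C_mem_Ohat {c : K} (hc : c ∈ Oz) : C c ∈ Ohat := ⟨C ⟨c, hc⟩, map_C _ _⟩

theorem X_mem_Ohat : (X : Khat) ∈ Ohat := ⟨X, map_X _⟩

theorem mem_Ohat_of_X_pow_mul_mem {F : Khat} {n : ℕ} (h : X ^ n * F ∈ Ohat) : F ∈ Ohat :=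
  mem_Ohat_iff.mpr fun i => by simpa [coeff_X_pow_mul] using coeff_mem_Oz h (i + n)

theorem coeff_pD (F : Khat) (n : ℕ) : coeff n (pD F) = lD (coeff n F) := coeff_mk _ _

theorem pD_add (F G : Khat) : pD (F + G) = pD F + pD G :=
  PowerSeries.ext fun n => by simp [coeff_pD, lD_add]

theorem pD_mul (F G : Khat) : pD (F * G) = pD F * G + F * pD G := by
  refine PowerSeries.ext fun n => ?_
  simp only [coeff_pD, map_add, coeff_mul, lD_sum, ← Finset.sum_add_distrib]
  exact Finset.sum_congr rfl fun _ _ => lD_mul _ _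

theorem pD_sum {α : Type*} (s : Finset α) (F : α → Khat) :
    pD (∑ i ∈ s, F i) = ∑ i ∈ s, pD (F i) :=
  map_sum (AddMonoidHom.mk' pD pD_add) F s

theorem pD_X_pow_mul (n : ℕ) (F : Khat) : pD (X ^ n * F) = X ^ n * pD F := by
  refine PowerSeries.ext fun m => ?_
  simp only [coeff_pD, coeff_X_pow_mul']
  split_ifs
  · rfl
  · exact lD_zero

theorem pD_C (c : K) : pD (C c) = C (lD c) := by
  refine PowerSeries.ext fun n => ?_
  simp only [coeff_pD, coeff_C]
  split_ifs
  · rfl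
  · exact lD_zero

theorem pD_mem_Ohat {F : Khat} (hF : F ∈ Ohat) : pD F ∈ Ohat :=
  mem_Ohat_iff.mpr fun n => by simpa [coeff_pD] using lD_mem_Oz (coeff_mem_Oz hF n)

section MatrixDerivation

variable {ι : Type*}

theorem map_pD_sub (P Q : Matrix ι ι Khat) : (P - Q).map pD = P.map pD - Q.map pD :=
  Matrix.map_sub _ (map_sub (AddMonoidHom.mk' pD pD_add)) P Q

variable [Fintype ι]

theorem map_pD_mul (P Q : Matrix ι ι Khat) : (P * Q).map pD = P.map pD * Q + P * Q.map pD := by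
  refine Matrix.ext fun i j => ?_
  simp only [map_apply, Matrix.add_apply, mul_apply, pD_sum, ← Finset.sum_add_distrib]
  exact Finset.sum_congr rfl fun _ _ => pD_mul _ _

variable [DecidableEq ι]

theorem scalar_mul_apply (a : Khat) (M : Matrix ι ι Khat) (i j : ι) :
    (scalar ι a * M) i j = a * M i j := by
  rw [scalar_apply, diagonal_mul]

theorem scalar_mul_comm (a : Khat) (M : Matrix ι ι Khat) : scalar ι a * M = M * scalar ι a :=
  (scalar_commute a (fun _ => Commute.all _ _) M).eq

theorem scalar_mem_matrix {a : Khat} (ha : a ∈ Ohat) : scalar ι a ∈ Ohat.matrix :=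
  (diagonal_mem_matrix_iff (zero_mem Ohat)).mpr fun _ => ha

theorem map_pD_one : (1 : Matrix ι ι Khat).map pD = 0 := by
  simpa using map_pD_mul (1 : Matrix ι ι Khat) 1

theorem map_pD_scalar_X_pow_mul (n : ℕ) (P : Matrix ι ι Khat) :
    (scalar ι ((X : Khat) ^ n) * P).map pD = scalar ι ((X : Khat) ^ n) * P.map pD :=
  Matrix.ext fun i j => by simp only [map_apply, scalar_mul_apply, pD_X_pow_mul]

theorem map_pD_mapMatrix_C (M : Matrix ι ι K) :
    ((C : K →+* Khat).mapMatrix M).map pD = (C : K →+* Khat).mapMatrix (M.map lD) :=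
  Matrix.ext fun i j => pD_C (M i j)

end MatrixDerivation

section GaugeDefect

variable {ι : Type*} [Fintype ι] [DecidableEq ι]

/-- `gaugeDefect A B R = 0` says that `R` gauge-transforms `A` into `B`:
`B = R⁻¹ A R + λ R⁻¹ dR/dz` when `R` is invertible. -/
def gaugeDefect (A B R : Matrix ι ι Khat) : Matrix ι ι Khat :=
  R * B - A * R - scalar ι (X : Khat) * R.map pD

theorem scalar_X_mul_map_pD_of_gaugeDefect_eq_zero {A B R : Matrix ι ι Khat}
    (h : gaugeDefect A B R = 0) : scalar ι (X : Khat) * R.map pD = R * B - A * R :=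
  (sub_eq_zero.mp h).symm

theorem gaugeDefect_sub (A B R S : Matrix ι ι Khat) :
    gaugeDefect A B (R - S) = gaugeDefect A B R - gaugeDefect A B S := by
  simp only [gaugeDefect, map_pD_sub, Matrix.mul_sub, Matrix.sub_mul]
  abel

theorem gaugeDefect_scalar_X_pow_mul (A B R : Matrix ι ι Khat) (n : ℕ) :
    gaugeDefect A B (scalar ι ((X : Khat) ^ n) * R) =
      scalar ι ((X : Khat) ^ n) * gaugeDefect A B R := by
  simp only [gaugeDefect, map_pD_scalar_X_pow_mul, Matrix.mul_sub, ← Matrix.mul_assoc,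
    scalar_mul_comm _ A, ← map_mul, mul_comm (X : Khat)]

theorem gaugeDefect_mul {A B C R S : Matrix ι ι Khat} (hR : gaugeDefect A B R = 0)
    (hS : gaugeDefect B C S = 0) : gaugeDefect A C (R * S) = 0 := by
  rw [gaugeDefect, map_pD_mul, Matrix.mul_add, ← Matrix.mul_assoc _ (R.map pD),
    scalar_X_mul_map_pD_of_gaugeDefect_eq_zero hR, ← Matrix.mul_assoc _ R (S.map pD),
    scalar_mul_comm _ R, Matrix.mul_assoc R _ (S.map pD),
    scalar_X_mul_map_pD_of_gaugeDefect_eq_zero hS]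
  simp only [Matrix.mul_sub, Matrix.sub_mul, Matrix.mul_assoc]
  abel

theorem gaugeDefect_inv {A B R : Matrix ι ι Khat} (h : gaugeDefect A B R = 0) (hR : IsUnit R) :
    gaugeDefect B A R⁻¹ = 0 := by
  have hdet : IsUnit R.det := (isUnit_iff_isUnit_det R).mp hR
  have hinv : R⁻¹.map pD = -(R⁻¹ * R.map pD * R⁻¹) := by
    have h1 := map_pD_mul R⁻¹ R
    rw [nonsing_inv_mul R hdet, map_pD_one] at h1
    calc R⁻¹.map pD = R⁻¹.map pD * R * R⁻¹ := by
          rw [Matrix.mul_assoc, mul_nonsing_inv R hdet, Matrix.mul_one]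
      _ = -(R⁻¹ * R.map pD * R⁻¹) := by
          rw [eq_neg_of_add_eq_zero_left h1.symm, Matrix.neg_mul]
  rw [gaugeDefect, hinv, Matrix.mul_neg, ← Matrix.mul_assoc, ← Matrix.mul_assoc,
    scalar_mul_comm, Matrix.mul_assoc R⁻¹, scalar_X_mul_map_pD_of_gaugeDefect_eq_zero h]
  simp only [Matrix.mul_sub, Matrix.sub_mul, ← Matrix.mul_assoc, nonsing_inv_mul R hdet,
    Matrix.one_mul, Matrix.mul_assoc _ R R⁻¹, mul_nonsing_inv R hdet, Matrix.mul_one]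
  abel

theorem gaugeDefect_mem_matrix {A B R : Matrix ι ι Khat} (hA : A ∈ Ohat.matrix)
    (hB : B ∈ Ohat.matrix) (hR : R ∈ Ohat.matrix) : gaugeDefect A B R ∈ Ohat.matrix :=
  sub_mem (sub_mem (mul_mem hR hB) (mul_mem hA hR))
    (mul_mem (scalar_mem_matrix X_mem_Ohat) fun i j => pD_mem_Ohat (hR i j))

end GaugeDefect

section Coefficients

variable {ι : Type*} [Fintype ι]

theorem map_coeff_one_mul (P Q : Matrix ι ι Khat) :
    (P * Q).map (coeff 1) = P.map ev0 * Q.map (coeff 1) + P.map (coeff 1) * Q.map ev0 := by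
  refine Matrix.ext fun i j => ?_
  simp [mul_apply, coeff_mul, Finset.Nat.antidiagonal_succ, Finset.sum_add_distrib, ev0]

variable [DecidableEq ι]

theorem mapMatrix_C_mem_matrix {M : Matrix ι ι K} (hM : M ∈ Oz.matrix) :
    (C : K →+* Khat).mapMatrix M ∈ Ohat.matrix :=
  fun i j => C_mem_Ohat (hM i j)

theorem map_coeff_mem_matrix {P : Matrix ι ι Khat} (hP : P ∈ Ohat.matrix) (n : ℕ) :
    P.map (coeff n) ∈ Oz.matrix :=
  fun i j => coeff_mem_Oz (hP i j) n

theorem map_ev0_mem_matrix {P : Matrix ι ι Khat} (hP : P ∈ Ohat.matrix) :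
    P.map ev0 ∈ Oz.matrix := fun i j => by
  rw [map_apply, ev0, ← coeff_zero_eq_constantCoeff_apply]
  exact coeff_mem_Oz (hP i j) 0

theorem mem_matrix_of_scalar_X_pow_mul_mem {M : Matrix ι ι Khat} {n : ℕ}
    (h : scalar ι ((X : Khat) ^ n) * M ∈ Ohat.matrix) : M ∈ Ohat.matrix := fun i j => by
  have hij := h i j
  rw [scalar_mul_apply] at hij
  exact mem_Ohat_of_X_pow_mul_mem hij

theorem exists_eq_mapMatrix_C_add_scalar_X_mul (U : Matrix ι ι Khat) :
    ∃ U', U = (C : K →+* Khat).mapMatrix (U.map ev0) + scalar ι (X : Khat) * U' :=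
  ⟨U.map fun F => mk fun p => coeff (p + 1) F, Matrix.ext fun _ _ => by
    rw [Matrix.add_apply, scalar_mul_apply]
    exact (eq_X_mul_shift_add_const _).trans (add_comm _ _)⟩

theorem mapMatrix_ev0_scalar_X : ev0.mapMatrix (scalar ι (X : Khat)) = 0 := by
  rw [RingHom.mapMatrix_apply, scalar_apply, diagonal_map (map_zero _)]
  simp [ev0]

theorem map_ev0_gaugeDefect (A B U : Matrix ι ι Khat) :
    (gaugeDefect A B U).map ev0 = U.map ev0 * B.map ev0 - A.map ev0 * U.map ev0 := by
  simp only [gaugeDefect, ← RingHom.mapMatrix_apply, map_sub, map_mul, mapMatrix_ev0_scalar_X,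
    zero_mul, sub_zero]

theorem map_coeff_one_gaugeDefect (A B U : Matrix ι ι Khat) :
    (gaugeDefect A B U).map (coeff 1) =
      zGaugeDefect (A.map (coeff 1)) (B.map (coeff 1)) (U.map ev0) +
        (U.map (coeff 1) * B.map ev0 - A.map ev0 * U.map (coeff 1)) := by
  have hX : (scalar ι (X : Khat) * U.map pD).map (coeff 1) = (U.map ev0).map lD :=
    Matrix.ext fun i j => by simp [coeff_pD, ev0]
  rw [gaugeDefect, Matrix.map_sub _ (map_sub _), Matrix.map_sub _ (map_sub _), hX,
    map_coeff_one_mul, map_coeff_one_mul, zGaugeDefect]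
  abel

end Coefficients

theorem lamGauge_eq (A R : M₂ Khat) :
    lamGauge A R = R⁻¹ * A * R + scalar (Fin 2) (X : Khat) * (R⁻¹ * R.map pD) := by
  rw [lamGauge, smul_eq_diagonal_mul _ X, scalar_apply]

theorem gaugeDefect_lamGauge (A : M₂ Khat) {R : M₂ Khat} (hR : IsUnit R) :
    gaugeDefect A (lamGauge A R) R = 0 := by
  have hRR : R * R⁻¹ = 1 := mul_nonsing_inv R ((isUnit_iff_isUnit_det R).mp hR)
  have h1 : R * (R⁻¹ * A * R) = A * R := by
    rw [← Matrix.mul_assoc, ← Matrix.mul_assoc, hRR, Matrix.one_mul]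
  have h2 : R * (scalar _ X * (R⁻¹ * R.map pD)) = scalar _ X * R.map pD := by
    rw [← Matrix.mul_assoc, ← scalar_mul_comm, Matrix.mul_assoc, ← Matrix.mul_assoc R, hRR,
      Matrix.one_mul]
  rw [gaugeDefect, lamGauge_eq, Matrix.mul_add, h1, h2]
  abel

theorem map_ev0_lamGauge (A : M₂ Khat) (u : (M₂ Khat)ˣ) :
    (lamGauge A u).map ev0 =
      (↑(Units.map ev0.mapMatrix.toMonoidHom u)⁻¹ : M₂ K) * A.map ev0 *
        (↑(Units.map ev0.mapMatrix.toMonoidHom u) : M₂ K) := by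
  rw [lamGauge_eq, ← coe_units_inv]
  simp only [← RingHom.mapMatrix_apply, map_add, map_mul, mapMatrix_ev0_scalar_X, zero_mul,
    add_zero]
  rfl

theorem lamGauge_mapMatrix_C {A : M₂ Khat} (hA : A ∈ Ohat.matrix) {G : (M₂ K)ˣ}
    (hG : (↑G : M₂ K) ∈ Oz.matrix) (hGi : (↑G⁻¹ : M₂ K) ∈ Oz.matrix) :
    lamGauge A ↑(Units.map (C : K →+* Khat).mapMatrix.toMonoidHom G) ∈ Ohat.matrix ∧
      (lamGauge A ↑(Units.map (C : K →+* Khat).mapMatrix.toMonoidHom G)).map ev0 =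
        (↑G⁻¹ : M₂ K) * A.map ev0 * (↑G : M₂ K) := by
  constructor
  · rw [lamGauge_eq, ← coe_units_inv]
    simp only [Units.coe_map, Units.coe_map_inv, RingHom.toMonoidHom_eq_coe, MonoidHom.coe_coe,
      map_pD_mapMatrix_C]
    exact add_mem (mul_mem (mul_mem (mapMatrix_C_mem_matrix hGi) hA) (mapMatrix_C_mem_matrix hG))
      (mul_mem (scalar_mem_matrix X_mem_Ohat) (mul_mem (mapMatrix_C_mem_matrix hGi)
        (mapMatrix_C_mem_matrix fun i j => lD_mem_Oz (hG i j))))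
  · exact map_ev0_lamGauge A _

theorem map_ev0_mem_matrix_of_gaugeDefect_mem {T D : K} (hT : T ∈ Oz) (hD : D ∈ Oz)
    (he0 : (T ^ 2 - 4 * D).coeff 0 = 0) (he1 : (T ^ 2 - 4 * D).coeff 1 ≠ 0)
    {A B U : M₂ Khat} (hA : A ∈ Ohat.matrix) (hB : B ∈ Ohat.matrix)
    (hA0 : A.map ev0 = companion T D) (hB0 : B.map ev0 = companion T D)
    (hU : gaugeDefect A B U ∈ Ohat.matrix) : U.map ev0 ∈ Oz.matrix := by
  have h₀ := map_ev0_mem_matrix hU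
  have h₁ := map_coeff_mem_matrix hU 1
  rw [map_ev0_gaugeDefect, hA0, hB0] at h₀
  rw [map_coeff_one_gaugeDefect, hA0, hB0] at h₁
  exact mem_matrix_of_companion_step hT hD he0 he1 (map_coeff_mem_matrix hA 1)
    (map_coeff_mem_matrix hB 1) h₀ h₁

theorem exists_sub_scalar_X_pow_mul_mem {T D : K} (hT : T ∈ Oz) (hD : D ∈ Oz)
    (he0 : (T ^ 2 - 4 * D).coeff 0 = 0) (he1 : (T ^ 2 - 4 * D).coeff 1 ≠ 0)
    {A B S : M₂ Khat} (hA : A ∈ Ohat.matrix) (hB : B ∈ Ohat.matrix)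
    (hA0 : A.map ev0 = companion T D) (hB0 : B.map ev0 = companion T D)
    (hS : gaugeDefect A B S = 0) (n : ℕ) :
    ∃ U, S - scalar (Fin 2) ((X : Khat) ^ n) * U ∈ Ohat.matrix := by
  induction n with
  | zero => exact ⟨S, by simp⟩
  | succ n ih =>
    obtain ⟨U, hU⟩ := ih
    have hdefect : gaugeDefect A B U ∈ Ohat.matrix := by
      have h := gaugeDefect_mem_matrix hA hB hU
      rw [gaugeDefect_sub, hS, zero_sub, neg_mem_iff, gaugeDefect_scalar_X_pow_mul] at h
      exact mem_matrix_of_scalar_X_pow_mul_mem h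
    have hU0 := map_ev0_mem_matrix_of_gaugeDefect_mem hT hD he0 he1 hA hB hA0 hB0 hdefect
    obtain ⟨U', hU'⟩ := exists_eq_mapMatrix_C_add_scalar_X_mul U
    refine ⟨U', ?_⟩
    have hsplit : S - scalar (Fin 2) ((X : Khat) ^ (n + 1)) * U' =
        S - scalar (Fin 2) ((X : Khat) ^ n) * U +
          scalar (Fin 2) ((X : Khat) ^ n) * (U - scalar (Fin 2) (X : Khat) * U') := by
      rw [pow_succ, map_mul, Matrix.mul_sub, Matrix.mul_assoc]
      abel
    rw [hsplit, ← eq_sub_of_add_eq hU'.symm]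
    exact add_mem hU (mul_mem (scalar_mem_matrix (pow_mem X_mem_Ohat n))
      (mapMatrix_C_mem_matrix hU0))

theorem mem_matrix_of_gaugeDefect_eq_zero_of_companion {T D : K} (hT : T ∈ Oz) (hD : D ∈ Oz)
    (he0 : (T ^ 2 - 4 * D).coeff 0 = 0) (he1 : (T ^ 2 - 4 * D).coeff 1 ≠ 0)
    {A B S : M₂ Khat} (hA : A ∈ Ohat.matrix) (hB : B ∈ Ohat.matrix)
    (hA0 : A.map ev0 = companion T D) (hB0 : B.map ev0 = companion T D)
    (hS : gaugeDefect A B S = 0) : S ∈ Ohat.matrix := fun i j => by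
  refine mem_Ohat_iff.mpr fun n => ?_
  obtain ⟨U, hU⟩ := exists_sub_scalar_X_pow_mul_mem hT hD he0 he1 hA hB hA0 hB0 hS (n + 1)
  have h := coeff_mem_Oz (hU i j) n
  rwa [Matrix.sub_apply, scalar_mul_apply, map_sub, coeff_X_pow_mul', if_neg (by omega),
    sub_zero] at h

theorem mem_matrix_of_gaugeDefect_eq_zero {T D : K} (he0 : (T ^ 2 - 4 * D).coeff 0 = 0)
    (he1 : (T ^ 2 - 4 * D).coeff 1 ≠ 0) {A B R : M₂ Khat} (hA : A ∈ Ohat.matrix)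
    (hB : B ∈ Ohat.matrix) (htrA : (A.map ev0).trace = T) (hdetA : (A.map ev0).det = D)
    (htrB : (B.map ev0).trace = T) (hdetB : (B.map ev0).det = D) (hR : gaugeDefect A B R = 0) :
    R ∈ Ohat.matrix := by
  have hT : T ∈ Oz := htrA ▸ trace_mem_Oz (map_ev0_mem_matrix hA)
  have hD : D ∈ Oz := hdetA ▸ det_mem_Oz (map_ev0_mem_matrix hA)
  obtain ⟨G, hG, hGi, hGA⟩ :=
    exists_units_conj_eq_companion (map_ev0_mem_matrix hA) (by rwa [htrA, hdetA])
  obtain ⟨H, hH, hHi, hHB⟩ :=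
    exists_units_conj_eq_companion (map_ev0_mem_matrix hB) (by rwa [htrB, hdetB])
  rw [htrA, hdetA] at hGA
  rw [htrB, hdetB] at hHB
  obtain ⟨hA', hA'0⟩ := lamGauge_mapMatrix_C hA hG hGi
  obtain ⟨hB', hB'0⟩ := lamGauge_mapMatrix_C hB hH hHi
  set Ĝ := Units.map (C : K →+* Khat).mapMatrix.toMonoidHom G
  set Ĥ := Units.map (C : K →+* Khat).mapMatrix.toMonoidHom H
  have hS : gaugeDefect (lamGauge A Ĝ) (lamGauge B Ĥ) ((Ĝ : M₂ Khat)⁻¹ * R * Ĥ) = 0 :=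
    gaugeDefect_mul (gaugeDefect_mul (gaugeDefect_inv (gaugeDefect_lamGauge A Ĝ.isUnit)
      Ĝ.isUnit) hR) (gaugeDefect_lamGauge B Ĥ.isUnit)
  have hSmem := mem_matrix_of_gaugeDefect_eq_zero_of_companion hT hD he0 he1 hA' hB'
    (hA'0.trans hGA) (hB'0.trans hHB) hS
  have hRS : R = (Ĝ : M₂ Khat) * ((Ĝ : M₂ Khat)⁻¹ * R * Ĥ) * (↑Ĥ⁻¹ : M₂ Khat) := by
    rw [← coe_units_inv]
    simp [Matrix.mul_assoc]
  rw [hRS]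
  exact mul_mem (mul_mem (mapMatrix_C_mem_matrix hG) hSmem) (mapMatrix_C_mem_matrix hHi)

theorem SimpleZero.coeff_ofPowerSeries {h : PowerSeries ℂ} (hh : SimpleZero h) :
    (HahnSeries.ofPowerSeries ℤ ℂ h).coeff 0 = 0 ∧
      (HahnSeries.ofPowerSeries ℤ ℂ h).coeff 1 ≠ 0 :=
  ⟨by simpa using (HahnSeries.ofPowerSeries_apply_coeff (Γ := ℤ) h 0).trans hh.1,
    by simpa using (HahnSeries.ofPowerSeries_apply_coeff (Γ := ℤ) h 1).symm ▸ hh.2⟩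

theorem stmt5_general (t d : PowerSeries ℂ) (hsz : SimpleZero (t ^ 2 - 4 * d))
    (A : Matrix (Fin 2) (Fin 2) Khat) (hA : ∀ i j, MemOhat (A i j))
    (htr : (A.map ev0).trace = HahnSeries.ofPowerSeries ℤ ℂ t)
    (hdet : (A.map ev0).det = HahnSeries.ofPowerSeries ℤ ℂ d)
    (R : Matrix (Fin 2) (Fin 2) Khat) (hR : IsUnit R)
    (hgauge : ∀ i j, MemOhat (lamGauge A R i j)) :
    (∀ i j, MemOhat (R i j)) ∧
      ∃ S : Matrix (Fin 2) (Fin 2) Khat, (∀ i j, MemOhat (S i j)) ∧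
        R * S = 1 ∧ S * R = 1 := by
  have hA' : A ∈ Ohat.matrix := fun i j => mem_Ohat_iff.mpr (hA i j)
  have hB : lamGauge A R ∈ Ohat.matrix := fun i j => mem_Ohat_iff.mpr (hgauge i j)
  have hAB := gaugeDefect_lamGauge A hR
  have hB0 := map_ev0_lamGauge A hR.unit
  rw [IsUnit.unit_spec] at hB0
  have htrB : ((lamGauge A R).map ev0).trace = HahnSeries.ofPowerSeries ℤ ℂ t := by
    rw [hB0, trace_units_conj', htr]
  have hdetB : ((lamGauge A R).map ev0).det = HahnSeries.ofPowerSeries ℤ ℂ d := by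
    rw [hB0, det_units_conj', hdet]
  obtain ⟨he0, he1⟩ := hsz.coeff_ofPowerSeries
  rw [map_sub, map_pow, map_mul, map_ofNat] at he0 he1
  have hRmem := mem_matrix_of_gaugeDefect_eq_zero he0 he1 hA' hB htr hdet htrB hdetB hAB
  have hRinv := mem_matrix_of_gaugeDefect_eq_zero he0 he1 hB hA' htrB hdetB htr hdet
    (gaugeDefect_inv hAB hR)
  have hRdet := (isUnit_iff_isUnit_det R).mp hR
  exact ⟨fun i j => mem_Ohat_iff.mp (hRmem i j), R⁻¹, fun i j => mem_Ohat_iff.mp (hRinv i j),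
    mul_nonsing_inv R hRdet, nonsing_inv_mul R hRdet⟩

/-- (Lemma on λ-gauge transforms.) If `A ∈ M₂(ℂ[[z,λ]])` with
`tr A(z,0) = t`, `det A(z,0) = d`, where `t² - 4d` has a simple zero at `z = 0`, and
`R ∈ M₂(ℂ((z))[[λ]])` is invertible with `R(z,0) ∈ M₂(ℂ[[z]])` invertible over `ℂ[[z]]`,
and if `Gauge_λ(A,R) ∈ M₂(ℂ[[z,λ]])`, then `R ∈ M₂(ℂ[[z,λ]])` and `R` is invertible
over `ℂ[[z,λ]]`. -/
theorem stmt5 (t d : PowerSeries ℂ) (hsz : SimpleZero (t ^ 2 - 4 * d))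
    (A : Matrix (Fin 2) (Fin 2) Khat) (hA : ∀ i j, MemOhat (A i j))
    (htr : (A.map ev0).trace = HahnSeries.ofPowerSeries ℤ ℂ t)
    (hdet : (A.map ev0).det = HahnSeries.ofPowerSeries ℤ ℂ d)
    (R : Matrix (Fin 2) (Fin 2) Khat) (hR : IsUnit R)
    (hR0 : ∀ i j, (R.map ev0) i j ∈ Oz)
    (hR0inv : ∃ S : Matrix (Fin 2) (Fin 2) K, (∀ i j, S i j ∈ Oz) ∧
      R.map ev0 * S = 1 ∧ S * R.map ev0 = 1)
    (hgauge : ∀ i j, MemOhat (lamGauge A R i j)) :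
    (∀ i j, MemOhat (R i j)) ∧
      ∃ S : Matrix (Fin 2) (Fin 2) Khat, (∀ i j, MemOhat (S i j)) ∧
        R * S = 1 ∧ S * R = 1 :=
  stmt5_general t d hsz A hA htr hdet R hR hgauge

end
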